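/- arXiv:1708.02575 — 2 statements merged into one kernel-verified Lean document; each statement's English description precedes it below -/
import Mathlib

section
/- Let m ≥ 2 be an integer and δ = 2 if m = 2, δ = 1 if m ≥ 3. Define d_0^m = 1, d_n^m = (2n+m−1)(n+m−2)!/(n! m!) for n ≥ 1, and let (λₙ)_{n≥1} be the block-ordered sequence whose first entry is 1 and whose (n+1)-th block (n ≥ 1) consists of d_n^m entries all equal to n^{−(2n+m−1)}. Then for every positive sequence (αₙ) with αₙ = o(n^{1/m}), the series ∑_{n=1}^{∞} n^{(n^{1/m})/(δm) + αₙ} λₙ converges. -/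
/-!
Every index `j` of the `(n+1)`-th block satisfies `j ≤ d_n^{m+1} ≤ (n+1)^m`, because
`d_k^m ≤ (k+1)^{m-1}`. Hence `j^{1/m} ≤ n+1` and `log j ≤ m log (n+1)`, so the exponent
`j^{1/m}/(δm) + αⱼ` is at most `3(n+1)/(2m)` for large `j`, and
`j^{j^{1/m}/(δm) + αⱼ + 2} ≤ n^{(3/2 + o(1)) n} ≤ n^{2n+m-1} = 1/λⱼ`.
The terms are therefore eventually dominated by `j^{-2}`.
-/

open Filter Topology

/-- `d_n^m`: `d_0^m = 1` and `d_n^m = (2n+m-1)(n+m-2)!/(n! m!)` for `n ≥ 1`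
(exact division). -/
def dDim (m n : ℕ) : ℕ :=
  if n = 0 then 1 else
    (2 * n + m - 1) * (n + m - 2).factorial / (n.factorial * m.factorial)

/-- `d_n^{m+1} = ∑_{k=0}^n d_k^m`: the index of the last entry of the `(n+1)`-th block. -/
def dDim' (m n : ℕ) : ℕ := ∑ k ∈ Finset.range (n + 1), dDim m k

open Real

lemma dDim_eq_choose (r : ℕ) {k : ℕ} (hk : k ≠ 0) :
    dDim (r + 2) k = (2 * k + r + 1) * (k + r).choose r / ((r + 2) * (r + 1)) := by
  have hfact : (k + r).factorial = (k + r).choose r * (k.factorial * r.factorial) := by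
    rw [← Nat.add_choose_mul_factorial_mul_factorial, mul_assoc]
  have hden :
      k.factorial * (r + 2).factorial = (r + 2) * (r + 1) * (k.factorial * r.factorial) := by
    rw [Nat.factorial_succ, Nat.factorial_succ]; ring
  simp only [dDim, if_neg hk, show 2 * k + (r + 2) - 1 = 2 * k + r + 1 by omega,
    show k + (r + 2) - 2 = k + r by omega, hfact, hden]
  rw [← mul_assoc]
  exact Nat.mul_div_mul_right _ _ (by positivity)

lemma one_le_dDim {m : ℕ} (hm : 2 ≤ m) (k : ℕ) : 1 ≤ dDim m k := by
  obtain ⟨r, rfl⟩ := Nat.exists_eq_add_of_le' hm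
  rcases Nat.eq_zero_or_pos k with rfl | hk
  · simp [dDim]
  rw [dDim_eq_choose r hk.ne', Nat.one_le_div_iff (by positivity)]
  have hchoose : r + 1 ≤ (k + r).choose r := by
    calc r + 1 = (r + 1).choose r := (Nat.choose_succ_self_right r).symm
      _ ≤ (k + r).choose r := Nat.choose_le_choose r (by omega)
  exact Nat.mul_le_mul (by omega) hchoose

lemma dDim_le_pow {m : ℕ} (hm : 2 ≤ m) (k : ℕ) : dDim m k ≤ (k + 1) ^ (m - 1) := by
  obtain ⟨r, rfl⟩ := Nat.exists_eq_add_of_le' hm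
  rcases Nat.eq_zero_or_pos k with rfl | hk
  · simp [dDim]
  rw [dDim_eq_choose r hk.ne', show r + 2 - 1 = r + 1 by omega]
  apply Nat.div_le_of_le_mul
  calc (2 * k + r + 1) * (k + r).choose r ≤ ((r + 2) * (k + 1)) * (k + 1) ^ r :=
        Nat.mul_le_mul (by nlinarith) (Nat.choose_add_le_add_one_pow k r)
    _ ≤ (r + 2) * (r + 1) * (k + 1) ^ (r + 1) := by
        rw [pow_succ]; nlinarith [Nat.zero_le ((r + 2) * (k + 1) ^ r * (k + 1))]

lemma dDim'_mono (m : ℕ) : Monotone (dDim' m) := fun _ _ h =>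
  Finset.sum_le_sum_of_subset (Finset.range_subset_range.mpr (by omega))

lemma le_dDim' {m : ℕ} (hm : 2 ≤ m) (n : ℕ) : n + 1 ≤ dDim' m n := by
  simpa [dDim'] using Finset.card_nsmul_le_sum (Finset.range (n + 1)) (dDim m) 1
    fun k _ => one_le_dDim hm k

lemma dDim'_le_pow {m : ℕ} (hm : 2 ≤ m) (n : ℕ) : dDim' m n ≤ (n + 1) ^ m := by
  calc dDim' m n ≤ ∑ _k ∈ Finset.range (n + 1), (n + 1) ^ (m - 1) :=
        Finset.sum_le_sum fun k hk => (dDim_le_pow hm k).trans <|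
          Nat.pow_le_pow_left (Finset.mem_range.mp hk) _
    _ = (n + 1) ^ m := by
        rw [Finset.sum_const, Finset.card_range, smul_eq_mul, ← pow_succ']
        congr 1; omega

lemma exists_mem_block {m : ℕ} (hm : 2 ≤ m) {N j : ℕ} (hj : dDim' m N < j) :
    ∃ n, N < n ∧ dDim' m (n - 1) < j ∧ j ≤ dDim' m n := by
  classical
  have hex : ∃ n, j ≤ dDim' m n := ⟨j, (Nat.le_succ j).trans (le_dDim' hm j)⟩
  have hN : N < Nat.find hex := by
    by_contra! h
    exact absurd ((Nat.find_spec hex).trans (dDim'_mono m h)) (by omega)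
  exact ⟨Nat.find hex, hN, not_le.mp (Nat.find_min hex (by omega)), Nat.find_spec hex⟩

lemma three_halves_mul_log_succ_le {m n : ℝ} (hm : 1 ≤ m) (hn : 16 * m ≤ n)
    (hlog : 12 ≤ log n) :
    (3 * (n + 1) / 2 + 2 * m) * log (n + 1) ≤ (2 * n + m - 1) * log n := by
  have hn0 : 0 < n := by linarith
  have hsucc : log (n + 1) ≤ log n + 1 := by
    calc log (n + 1) ≤ log (2 * n) := log_le_log (by linarith) (by linarith)
      _ = log 2 + log n := log_mul two_ne_zero hn0.ne'
      _ ≤ log n + 1 := by linarith [log_two_lt_d9]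
  have hmlog : m * log n ≤ n * log n / 16 := by nlinarith
  have hn_le : n ≤ n * log n / 12 := by nlinarith
  have hlog_le : log n ≤ n * log n / 16 := by nlinarith
  calc (3 * (n + 1) / 2 + 2 * m) * log (n + 1) ≤ (3 * (n + 1) / 2 + 2 * m) * (log n + 1) :=
        mul_le_mul_of_nonneg_left hsucc (by positivity)
    _ ≤ (2 * n + m - 1) * log n := by nlinarith

lemma rpow_mul_rpow_neg_le_rpow_neg_two {m : ℕ} (hm : 0 < m) {n j e : ℝ} (hn : 16 * m ≤ n)
    (hlog : 12 ≤ log n) (hj1 : 1 ≤ j) (hj : j ≤ (n + 1) ^ m)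
    (he : e ≤ 3 / (2 * m) * j ^ (m⁻¹ : ℝ)) :
    j ^ e * n ^ (-(2 * n + m - 1)) ≤ j ^ (-2 : ℝ) := by
  have hm1 : (1 : ℝ) ≤ m := by exact_mod_cast hm
  have hn0 : 0 < n := by linarith
  have hj0 : 0 < j := by linarith
  have hroot : j ^ (m⁻¹ : ℝ) ≤ n + 1 := by
    calc j ^ (m⁻¹ : ℝ) ≤ ((n + 1) ^ m) ^ (m⁻¹ : ℝ) :=
          rpow_le_rpow hj0.le hj (by positivity)
      _ = n + 1 := pow_rpow_inv_natCast (by linarith) hm.ne'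
  have he' : e ≤ 3 * (n + 1) / (2 * m) := by
    calc e ≤ 3 / (2 * m) * j ^ (m⁻¹ : ℝ) := he
      _ ≤ 3 / (2 * m) * (n + 1) := by gcongr
      _ = 3 * (n + 1) / (2 * m) := by ring
  have hlogj : log j ≤ m * log (n + 1) := by
    simpa only [log_pow] using log_le_log hj0 hj
  have key : (e + 2) * log j ≤ (2 * n + m - 1) * log n := by
    calc (e + 2) * log j ≤ (3 * (n + 1) / (2 * m) + 2) * (m * log (n + 1)) :=
          mul_le_mul (by linarith) hlogj (log_nonneg hj1) (by positivity)
      _ = (3 * (n + 1) / 2 + 2 * m) * log (n + 1) := by field_simp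
      _ ≤ (2 * n + m - 1) * log n := three_halves_mul_log_succ_le hm1 hn hlog
  rw [rpow_def_of_pos hj0, rpow_def_of_pos hn0, rpow_def_of_pos hj0, ← exp_add, exp_le_exp]
  linear_combination key

theorem block_sequence_series_converges_general
    (m : ℕ) (hm : 2 ≤ m)
    (δ : ℝ) (hδ : δ = if m = 2 then 2 else 1)
    -- the block-ordered sequence: first entry `1`, and the `(n+1)`-th block (`n ≥ 1`)
    -- consists of the `d_n^m` entries, at indices `d_{n-1}^{m+1}+1, …, d_n^{m+1}`,
    -- all equal to `n^{-(2n+m-1)}`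
    (lam : ℕ → ℝ)
    (hlam : ∀ n : ℕ, 1 ≤ n → ∀ j : ℕ, dDim' m (n - 1) < j → j ≤ dDim' m n →
      lam j = (n : ℝ) ^ (-(2 * (n : ℝ) + m - 1)))
    -- a positive sequence with `αₙ = o(n^{1/m})`
    (α : ℕ → ℝ)
    (hα : (fun n : ℕ => α n) =o[atTop] fun n : ℕ => (n : ℝ) ^ ((m : ℝ))⁻¹) :
    Summable (fun n : ℕ =>
      (n : ℝ) ^ ((n : ℝ) ^ ((m : ℝ))⁻¹ / (δ * m) + α n) * lam n) := by
  have hδ1 : 1 ≤ δ := by rw [hδ]; split_ifs <;> norm_num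
  obtain ⟨N, hN⟩ := eventually_atTop.mp <| (eventually_ge_atTop (16 * m)).and <|
    (tendsto_log_atTop.comp tendsto_natCast_atTop_atTop).eventually_ge_atTop 12
  refine Summable.of_norm_bounded_eventually (g := fun j : ℕ => (j : ℝ) ^ (-2 : ℝ))
    (summable_nat_rpow.mpr (by norm_num)) ?_
  rw [Nat.cofinite_eq_atTop]
  filter_upwards [hα.bound (by positivity : (0 : ℝ) < 1 / (2 * m)),
    eventually_gt_atTop (dDim' m N)] with j hαj hjN
  obtain ⟨n, hNn, hlt, hle⟩ := exists_mem_block hm hjN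
  obtain ⟨hnm, hlogn⟩ := hN n hNn.le
  set t := (j : ℝ) ^ ((m : ℝ))⁻¹
  have ht : 0 ≤ t := by positivity
  have hexp : t / (δ * m) + α j ≤ 3 / (2 * m) * t := by
    rw [norm_of_nonneg ht] at hαj
    have : t / (δ * m) ≤ t / m := by gcongr; nlinarith
    linarith [(le_abs_self (α j)).trans hαj,
      show 3 / (2 * m) * t = t / m + 1 / (2 * m) * t by ring]
  rw [hlam n (by omega) j hlt hle, norm_of_nonneg (by positivity)]
  refine rpow_mul_rpow_neg_le_rpow_neg_two (by omega) (by exact_mod_cast hnm) hlogn ?_ ?_ hexp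
  · exact_mod_cast (Nat.le_add_left 1 N).trans ((le_dDim' hm N).trans hjN.le)
  · exact_mod_cast hle.trans (dDim'_le_pow hm n)

theorem block_sequence_series_converges
    (m : ℕ) (hm : 2 ≤ m)
    (δ : ℝ) (hδ : δ = if m = 2 then 2 else 1)
    -- the block-ordered sequence: first entry `1`, and the `(n+1)`-th block (`n ≥ 1`)
    -- consists of the `d_n^m` entries, at indices `d_{n-1}^{m+1}+1, …, d_n^{m+1}`,
    -- all equal to `n^{-(2n+m-1)}`
    (lam : ℕ → ℝ) (hlam1 : lam 1 = 1)
    (hlam : ∀ n : ℕ, 1 ≤ n → ∀ j : ℕ, dDim' m (n - 1) < j → j ≤ dDim' m n →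
      lam j = (n : ℝ) ^ (-(2 * (n : ℝ) + m - 1)))
    -- a positive sequence with `αₙ = o(n^{1/m})`
    (α : ℕ → ℝ) (hαpos : ∀ n, 0 < α n)
    (hα : (fun n : ℕ => α n) =o[atTop] fun n : ℕ => (n : ℝ) ^ ((m : ℝ))⁻¹) :
    Summable (fun n : ℕ =>
      (n : ℝ) ^ ((n : ℝ) ^ ((m : ℝ))⁻¹ / (δ * m) + α n) * lam n) :=
  block_sequence_series_converges_general m hm δ hδ lam hlam α hα
end

section
/- Let m ≥ 2 be an integer and δ = 2 if m = 2, δ = 1 if m ≥ 3. Define d_0^m = 1, d_n^m = (2n+m−1)(n+m−2)!/(n! m!) for n ≥ 1, and let (λₙ)_{n≥1} be the block-ordered sequence whose first entry is 1 and whose (n+1)-th block (n ≥ 1) consists of d_n^m entries all equal to n^{−(2n+m−1)}. Then there exists ℓ ∈ (0,1) such that, with βₙ := ((2δm−ℓ)/(ℓδm)) · n^{1/m} (so that βₙ = O(n^{1/m})), the series ∑_{n=1}^{∞} n^{(n^{1/m})/(δm) + βₙ} λₙ diverges. -/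
/- Optimality: for the explicit block-ordered eigenvalue sequence there is `ℓ ∈ (0,1)`
such that with `βₙ = ((2δm−ℓ)/(ℓδm)) n^{1/m} = O(n^{1/m})` the series
`∑ n^{n^{1/m}/(δm)+βₙ} λₙ` diverges. -/

open Filter Topology

lemma pow_mul_factorial_le (k j : ℕ) : k ^ j * k.factorial ≤ (k + j).factorial := by
  induction j with
  | zero => simp
  | succ j ih =>
      calc k ^ (j + 1) * k.factorial = k * (k ^ j * k.factorial) := by ring
        _ ≤ k * (k + j).factorial := Nat.mul_le_mul_left k ih
        _ ≤ (k + j + 1) * (k + j).factorial := Nat.mul_le_mul_right _ (by omega)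
        _ = (k + (j + 1)).factorial := by
            rw [show k + (j + 1) = (k + j) + 1 by omega, Nat.factorial_succ]

lemma factorial_mul_factorial_le (k j : ℕ) (hk : 1 ≤ k) :
    k.factorial * (j + 1).factorial ≤ (k + j).factorial := by
  induction j with
  | zero => simp
  | succ j ih =>
      calc k.factorial * (j + 2).factorial
          = (j + 2) * (k.factorial * (j + 1).factorial) := by
            rw [Nat.factorial_succ]; ring
        _ ≤ (j + 2) * (k + j).factorial := Nat.mul_le_mul_left _ ih
        _ ≤ (k + j + 1) * (k + j).factorial := Nat.mul_le_mul_right _ (by omega)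
        _ = (k + (j + 1)).factorial := by
            rw [show k + (j + 1) = (k + j) + 1 by omega, Nat.factorial_succ]

lemma one_le_dDim_s14 (m' k : ℕ) (hk : 1 ≤ k) : 1 ≤ dDim (m' + 2) k := by
  have hk0 : k ≠ 0 := by omega
  unfold dDim
  rw [if_neg hk0, show 2 * k + (m' + 2) - 1 = 2 * k + m' + 1 by omega,
    show k + (m' + 2) - 2 = k + m' by omega,
    Nat.one_le_div_iff (Nat.mul_pos (Nat.factorial_pos _) (Nat.factorial_pos _))]
  calc k.factorial * (m' + 2).factorial
      = (m' + 2) * (k.factorial * (m' + 1).factorial) := by rw [Nat.factorial_succ]; ring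
    _ ≤ (m' + 2) * (k + m').factorial :=
        Nat.mul_le_mul_left _ (factorial_mul_factorial_le k m' hk)
    _ ≤ (2 * k + m' + 1) * (k + m').factorial := Nat.mul_le_mul_right _ (by omega)

lemma pow_div_le_dDim (m' k : ℕ) : k ^ (m' + 1) / (m' + 2).factorial ≤ dDim (m' + 2) k := by
  rcases Nat.eq_zero_or_pos k with hk | hk
  · subst hk; simp [dDim]
  have hk0 : k ≠ 0 := by omega
  unfold dDim
  rw [if_neg hk0, show 2 * k + (m' + 2) - 1 = 2 * k + m' + 1 by omega,
    show k + (m' + 2) - 2 = k + m' by omega,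
    Nat.le_div_iff_mul_le (Nat.mul_pos (Nat.factorial_pos _) (Nat.factorial_pos _))]
  calc k ^ (m' + 1) / (m' + 2).factorial * (k.factorial * (m' + 2).factorial)
      = (k ^ (m' + 1) / (m' + 2).factorial * (m' + 2).factorial) * k.factorial := by ring
    _ ≤ k ^ (m' + 1) * k.factorial :=
        Nat.mul_le_mul_right _ (Nat.div_mul_le_self _ _)
    _ = k * (k ^ m' * k.factorial) := by ring
    _ ≤ k * (k + m').factorial := Nat.mul_le_mul_left _ (pow_mul_factorial_le k m')
    _ ≤ (2 * k + m' + 1) * (k + m').factorial := Nat.mul_le_mul_right _ (by omega)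

lemma succ_le_dDim' (m' n : ℕ) : n + 1 ≤ dDim' (m' + 2) n := by
  have h : ∀ k ∈ Finset.range (n + 1), 1 ≤ dDim (m' + 2) k := by
    intro k _
    rcases Nat.eq_zero_or_pos k with h | h
    · subst h; simp [dDim]
    · exact one_le_dDim_s14 m' k h
  calc n + 1 = ∑ _k ∈ Finset.range (n + 1), 1 := by simp
    _ ≤ dDim' (m' + 2) n := Finset.sum_le_sum h

lemma pow_le_dDim' (m' n : ℕ) (hn : 4 * (m' + 2).factorial + 2 ≤ n) :
    n ^ (m' + 2) ≤ 4 ^ (m' + 2) * (2 * (m' + 2).factorial) * dDim' (m' + 2) n := by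
  set A := (m' + 2).factorial with hA
  set K := n / 2 with hK
  set q := K ^ (m' + 1) / A with hq
  have hA1 : 1 ≤ A := Nat.factorial_pos _
  have hK2A : 2 * A + 1 ≤ K := by omega
  have hK1 : 1 ≤ K := by omega
  have hsub : Finset.Icc K (2 * K) ⊆ Finset.range (n + 1) := by
    intro k hk
    simp only [Finset.mem_Icc] at hk
    simp only [Finset.mem_range]
    omega
  have hstep1 : (K + 1) * q ≤ dDim' (m' + 2) n := by
    calc (K + 1) * q = ∑ _k ∈ Finset.Icc K (2 * K), q := by
          rw [Finset.sum_const, Nat.card_Icc, smul_eq_mul]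
          congr 1
          omega
      _ ≤ ∑ k ∈ Finset.Icc K (2 * K), dDim (m' + 2) k := by
          apply Finset.sum_le_sum
          intro k hk
          simp only [Finset.mem_Icc] at hk
          calc q ≤ k ^ (m' + 1) / A := Nat.div_le_div_right (Nat.pow_le_pow_left hk.1 _)
            _ ≤ dDim (m' + 2) k := pow_div_le_dDim m' k
      _ ≤ dDim' (m' + 2) n := Finset.sum_le_sum_of_subset hsub
  have hKm : K ^ (m' + 1) ≤ 2 * (A * q) := by
    have hdm : A * q + K ^ (m' + 1) % A = K ^ (m' + 1) := Nat.div_add_mod _ _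
    have hmod : K ^ (m' + 1) % A < A := Nat.mod_lt _ hA1
    have h2 : 2 * A ≤ K ^ (m' + 1) := by
      calc 2 * A ≤ K := by omega
        _ = K ^ 1 := (pow_one K).symm
        _ ≤ K ^ (m' + 1) := Nat.pow_le_pow_right hK1 (by omega)
    omega
  have h2pow : (2:ℕ) ^ (m' + 2) * 2 ^ (m' + 1) ≤ 4 ^ (m' + 2) := by
    rw [← pow_add, show (4:ℕ) = 2 ^ 2 from rfl, ← pow_mul]
    exact Nat.pow_le_pow_right (by norm_num) (by omega)
  calc n ^ (m' + 2) ≤ (2 * (K + 1)) ^ (m' + 2) := Nat.pow_le_pow_left (by omega) _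
    _ = 2 ^ (m' + 2) * ((K + 1) ^ (m' + 1) * (K + 1)) := by rw [mul_pow]; ring
    _ ≤ 2 ^ (m' + 2) * ((2 * K) ^ (m' + 1) * (K + 1)) := by
        apply Nat.mul_le_mul_left
        exact Nat.mul_le_mul_right _ (Nat.pow_le_pow_left (by omega) _)
    _ = 2 ^ (m' + 2) * 2 ^ (m' + 1) * (K ^ (m' + 1) * (K + 1)) := by rw [mul_pow]; ring
    _ ≤ 4 ^ (m' + 2) * (K ^ (m' + 1) * (K + 1)) := Nat.mul_le_mul_right _ h2pow
    _ ≤ 4 ^ (m' + 2) * ((2 * (A * q)) * (K + 1)) := by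
        apply Nat.mul_le_mul_left
        exact Nat.mul_le_mul_right _ hKm
    _ = 4 ^ (m' + 2) * (2 * A) * ((K + 1) * q) := by ring
    _ ≤ 4 ^ (m' + 2) * (2 * A) * dDim' (m' + 2) n := Nat.mul_le_mul_left _ hstep1

theorem block_sequence_series_diverges
    (m : ℕ) (hm : 2 ≤ m)
    (δ : ℝ) (hδ : δ = if m = 2 then 2 else 1)
    -- the block-ordered sequence: first entry `1`, and the `(n+1)`-th block (`n ≥ 1`)
    -- consists of the `d_n^m` entries, at indices `d_{n-1}^{m+1}+1, …, d_n^{m+1}`,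
    -- all equal to `n^{-(2n+m-1)}`
    (lam : ℕ → ℝ) (hlam1 : lam 1 = 1)
    (hlam : ∀ n : ℕ, 1 ≤ n → ∀ j : ℕ, dDim' m (n - 1) < j → j ≤ dDim' m n →
      lam j = (n : ℝ) ^ (-(2 * (n : ℝ) + m - 1))) :
    -- there is `ℓ ∈ (0,1)` such that with `βₙ = ((2δm−ℓ)/(ℓδm)) n^{1/m}` the series diverges
    ∃ ℓ : ℝ, 0 < ℓ ∧ ℓ < 1 ∧
      ¬ Summable (fun n : ℕ =>
        (n : ℝ) ^ ((n : ℝ) ^ ((m : ℝ))⁻¹ / (δ * m) +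
          ((2 * δ * m - ℓ) / (ℓ * δ * m)) * (n : ℝ) ^ ((m : ℝ))⁻¹) * lam n) := by
  obtain ⟨m', rfl⟩ : ∃ m', m = m' + 2 := ⟨m - 2, by omega⟩
  have hMR : (2 : ℝ) ≤ ((m' + 2 : ℕ) : ℝ) := by exact_mod_cast hm
  have hMne : ((m' + 2 : ℕ) : ℝ) ≠ 0 := by positivity
  have hδpos : 0 < δ := by rw [hδ]; split <;> norm_num
  set B : ℕ := 4 ^ (m' + 2) * (2 * (m' + 2).factorial) with hBdef
  have hB0 : 0 < B := by positivity
  have hB1 : 1 ≤ B := hB0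
  have hBR : (1 : ℝ) ≤ (B : ℝ) := by exact_mod_cast hB1
  have hBpos : (0 : ℝ) < (B : ℝ) := by linarith
  set l : ℝ := 1 / ((B : ℝ) * ((m' + 2 : ℕ) : ℝ) + 4) with hldef
  have hlpos : 0 < l := by positivity
  have hl1 : l < 1 := by
    rw [hldef]
    rw [div_lt_one (by positivity)]
    nlinarith [hBR, hMR]
  refine ⟨l, hlpos, hl1, ?_⟩
  intro hsum
  have hlne : l ≠ 0 := ne_of_gt hlpos
  have hδne : δ ≠ 0 := ne_of_gt hδpos
  -- the exponent simplifies to (2/l) * x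
  have hexp : ∀ x : ℝ, x / (δ * ((m' + 2 : ℕ) : ℝ)) +
      (2 * δ * ((m' + 2 : ℕ) : ℝ) - l) / (l * δ * ((m' + 2 : ℕ) : ℝ)) * x = (2 / l) * x := by
    intro x
    field_simp
    ring
  -- key estimate
  have key : ∀ n : ℕ, 4 * (m' + 2).factorial + 2 ≤ n →
      1 ≤ ((dDim' (m' + 2) n : ℕ) : ℝ) ^
        (((dDim' (m' + 2) n : ℕ) : ℝ) ^ (((m' + 2 : ℕ) : ℝ))⁻¹ / (δ * ((m' + 2 : ℕ) : ℝ)) +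
          (2 * δ * ((m' + 2 : ℕ) : ℝ) - l) / (l * δ * ((m' + 2 : ℕ) : ℝ)) *
            ((dDim' (m' + 2) n : ℕ) : ℝ) ^ (((m' + 2 : ℕ) : ℝ))⁻¹) * lam (dDim' (m' + 2) n) := by
    intro n hn
    have hfac : 1 ≤ (m' + 2).factorial := Nat.factorial_pos _
    have hn1 : 1 ≤ n := by omega
    set r : ℕ := dDim' (m' + 2) n with hr
    have hrge : n + 1 ≤ r := succ_le_dDim' m' n
    -- value of lam at r
    have hrv : lam r = (n : ℝ) ^ (-(2 * (n : ℝ) + ((m' + 2 : ℕ) : ℝ) - 1)) := by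
      apply hlam n hn1 r ?_ le_rfl
      obtain ⟨p, rfl⟩ : ∃ p, n = p + 1 := ⟨n - 1, by omega⟩
      have h1 : dDim' (m' + 2) p + dDim (m' + 2) (p + 1) = dDim' (m' + 2) (p + 1) := by
        simp only [dDim', Finset.sum_range_succ]
      have h2 : 1 ≤ dDim (m' + 2) (p + 1) := one_le_dDim_s14 m' (p + 1) (by omega)
      simp only [Nat.add_sub_cancel]
      omega
    have hnR1 : (1 : ℝ) ≤ (n : ℝ) := by exact_mod_cast hn1
    have hnr : (n : ℝ) ≤ (r : ℝ) := by exact_mod_cast (by omega : n ≤ r)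
    have hpow : ((n : ℝ)) ^ (m' + 2) ≤ (B : ℝ) * (r : ℝ) := by
      have := pow_le_dDim' m' n hn
      exact_mod_cast this
    -- root lower bound
    have hroot : (n : ℝ) / (B : ℝ) ≤ (r : ℝ) ^ (((m' + 2 : ℕ) : ℝ))⁻¹ := by
      have h1 : ((n : ℝ) ^ (m' + 2) / (B : ℝ)) ≤ (r : ℝ) := by
        rw [div_le_iff₀ hBpos]
        nlinarith [hpow, hnr, hnR1, hBR]
      have h2 : ((n : ℝ) ^ (m' + 2) / (B : ℝ)) ^ (((m' + 2 : ℕ) : ℝ))⁻¹ ≤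
          (r : ℝ) ^ (((m' + 2 : ℕ) : ℝ))⁻¹ :=
        Real.rpow_le_rpow (by positivity) h1 (by positivity)
      refine le_trans ?_ h2
      rw [Real.div_rpow (by positivity) hBpos.le,
        Real.pow_rpow_inv_natCast (by positivity) (by omega)]
      have hBle : (B : ℝ) ^ (((m' + 2 : ℕ) : ℝ))⁻¹ ≤ (B : ℝ) := by
        calc (B : ℝ) ^ (((m' + 2 : ℕ) : ℝ))⁻¹ ≤ (B : ℝ) ^ (1 : ℝ) :=
              Real.rpow_le_rpow_of_exponent_le hBR (by
                rw [inv_le_one_iff₀]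
                right
                linarith)
          _ = (B : ℝ) := Real.rpow_one _
      exact div_le_div_of_nonneg_left (by positivity) (Real.rpow_pos_of_pos hBpos _) hBle
    -- exponent lower bound
    have hE : 2 * (n : ℝ) + ((m' + 2 : ℕ) : ℝ) - 1 ≤ (2 / l) * (r : ℝ) ^ (((m' + 2 : ℕ) : ℝ))⁻¹ := by
      have h2l : 2 / l = 2 * ((B : ℝ) * ((m' + 2 : ℕ) : ℝ) + 4) := by
        rw [hldef]; field_simp
      have hstep : 2 * ((B : ℝ) * ((m' + 2 : ℕ) : ℝ) + 4) * ((n : ℝ) / (B : ℝ)) ≤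
          2 * ((B : ℝ) * ((m' + 2 : ℕ) : ℝ) + 4) * (r : ℝ) ^ (((m' + 2 : ℕ) : ℝ))⁻¹ := by
        apply mul_le_mul_of_nonneg_left hroot
        positivity
      rw [h2l]
      refine le_trans ?_ hstep
      have heq : 2 * ((B : ℝ) * ((m' + 2 : ℕ) : ℝ) + 4) * ((n : ℝ) / (B : ℝ)) =
          2 * ((m' + 2 : ℕ) : ℝ) * (n : ℝ) + 8 * (n : ℝ) / (B : ℝ) := by
        field_simp
        ring
      rw [heq]
      have h8 : (0 : ℝ) ≤ 8 * (n : ℝ) / (B : ℝ) := by positivity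
      nlinarith [mul_le_mul_of_nonneg_left hnR1 (le_trans (by norm_num) hMR :
        (0 : ℝ) ≤ ((m' + 2 : ℕ) : ℝ))]
    -- assemble
    rw [hrv, hexp]
    have h1 : (n : ℝ) ^ (2 * (n : ℝ) + ((m' + 2 : ℕ) : ℝ) - 1) ≤
        (r : ℝ) ^ ((2 / l) * (r : ℝ) ^ (((m' + 2 : ℕ) : ℝ))⁻¹) := by
      calc (n : ℝ) ^ (2 * (n : ℝ) + ((m' + 2 : ℕ) : ℝ) - 1)
          ≤ (n : ℝ) ^ ((2 / l) * (r : ℝ) ^ (((m' + 2 : ℕ) : ℝ))⁻¹) :=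
            Real.rpow_le_rpow_of_exponent_le hnR1 hE
        _ ≤ (r : ℝ) ^ ((2 / l) * (r : ℝ) ^ (((m' + 2 : ℕ) : ℝ))⁻¹) :=
            Real.rpow_le_rpow (by positivity) hnr (by positivity)
    calc (1 : ℝ) = (n : ℝ) ^ (2 * (n : ℝ) + ((m' + 2 : ℕ) : ℝ) - 1) *
          (n : ℝ) ^ (-(2 * (n : ℝ) + ((m' + 2 : ℕ) : ℝ) - 1)) := by
          rw [← Real.rpow_add (by linarith)]
          simp
      _ ≤ _ := mul_le_mul_of_nonneg_right h1 (Real.rpow_nonneg (by positivity) _)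
  -- derive the contradiction
  have htend := hsum.tendsto_atTop_zero
  have hrt : Tendsto (fun n => dDim' (m' + 2) n) atTop atTop := by
    apply tendsto_atTop_mono (fun n => ?_) tendsto_id
    have := succ_le_dDim' m' n
    simp only [id_eq]
    omega
  have h2 := htend.comp hrt
  have h3 : ∀ᶠ n in atTop,
      ((dDim' (m' + 2) n : ℕ) : ℝ) ^
        (((dDim' (m' + 2) n : ℕ) : ℝ) ^ (((m' + 2 : ℕ) : ℝ))⁻¹ / (δ * ((m' + 2 : ℕ) : ℝ)) +
          (2 * δ * ((m' + 2 : ℕ) : ℝ) - l) / (l * δ * ((m' + 2 : ℕ) : ℝ)) *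
            ((dDim' (m' + 2) n : ℕ) : ℝ) ^ (((m' + 2 : ℕ) : ℝ))⁻¹) * lam (dDim' (m' + 2) n) < 1 :=
    h2.eventually_lt_const (by norm_num)
  obtain ⟨n, hna, hnb⟩ := (h3.and (eventually_ge_atTop (4 * (m' + 2).factorial + 2))).exists
  exact absurd (key n hnb) (not_le.mpr hna)
end
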